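/- arXiv:1703.05535 — 3 statements merged into one kernel-verified Lean document; each statement's English description precedes it below -/
import Mathlib

section
/- For a tree G with edge set E and all n, i ≥ 0, a critical i-cell of the discrete gradient vector field on DConf_n^sink(G,V) exists if and only if i ≤ |E| and n ≥ 2i. -/
/-! STATEMENT 5: Combinatorial core of the homological dimension computation for trees.

We model a rooted tree by its set `Edge` of edges: the vertices are `Option Edge`, where
`none` is the root and `some e` is the top vertex `τ(e)` of the edge `e` (in a rooted
tree every non-root vertex is the top of a unique edge).  An `i`-cell of the discrete
sink configuration space on `n` labels is a function `σ : Fin n → Option Edge ⊕ Edge`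
(each label sits on a vertex or on an edge) such that exactly `i` labels sit on edges
and no two labels share an edge.  An occupied vertex `some e` is *blocked* iff the edge
`e` below it is occupied (the root is always blocked); an edge `e` occupied by label `j`
is *order respecting* iff `j` is smaller than every label occupying `τ(e)`.  A cell is
*critical* iff every occupied vertex is blocked and no edge is order respecting.

A critical `i`-cell on `n` labels exists iff `i ≤ |E|` and `n ≥ 2i`. -/
theorem critical_cell_exists_iff (Edge : Type) [Fintype Edge] [DecidableEq Edge]
    (n i : ℕ) :
    (∃ σ : Fin n → Option Edge ⊕ Edge,
      -- labels occupy distinct edges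
      (∀ j k : Fin n, ∀ e : Edge, σ j = Sum.inr e → σ k = Sum.inr e → j = k) ∧
      -- exactly `i` labels occupy edges
      (Finset.univ.filter (fun j => (σ j).isRight)).card = i ∧
      -- every occupied vertex is blocked
      (∀ j : Fin n, ∀ e : Edge, σ j = Sum.inl (some e) → ∃ k : Fin n, σ k = Sum.inr e) ∧
      -- no edge is order respecting: every occupied edge has a smaller label at its top
      (∀ j : Fin n, ∀ e : Edge, σ j = Sum.inr e →
        ∃ k : Fin n, σ k = Sum.inl (some e) ∧ k < j)) ↔
    (i ≤ Fintype.card Edge ∧ 2 * i ≤ n) := by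
  classical
  constructor
  · rintro ⟨σ, hdist, hcard, hblock, hord⟩
    have hS : ∀ j : Fin n, (σ j).isRight → ∃ e, σ j = Sum.inr e := by
      intro j h
      exact Sum.isRight_iff.mp h
    constructor
    · -- i ≤ card Edge
      rw [← hcard]
      have : (Finset.univ.filter (fun j => (σ j).isRight)).card ≤
          (Finset.univ.image (Sum.inr : Edge → Option Edge ⊕ Edge)).card := by
        apply Finset.card_le_card_of_injOn σ
        · intro j hj
          simp only [Finset.mem_coe, Finset.mem_filter] at hj
          obtain ⟨e, he⟩ := hS j hj.2
          simp [he]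
        · intro j hj k hk hjk
          simp only [Finset.coe_filter, Set.mem_setOf_eq] at hj hk
          obtain ⟨e, he⟩ := hS j hj.2
          exact hdist j k e he (hjk ▸ he)
      have h2 : (Finset.univ.image (Sum.inr : Edge → Option Edge ⊕ Edge)).card ≤
          Fintype.card Edge := by
        simpa using Finset.card_image_le
          (s := (Finset.univ : Finset Edge)) (f := (Sum.inr : Edge → Option Edge ⊕ Edge))
      exact this.trans h2
    · -- 2i ≤ n
      have H : ∀ j : Fin n, (σ j).isRight →
          ∃ k : Fin n, ∃ e, σ j = Sum.inr e ∧ σ k = Sum.inl (some e) := by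
        intro j h
        obtain ⟨e, he⟩ := hS j h
        obtain ⟨k, hk, _⟩ := hord j e he
        exact ⟨k, e, he, hk⟩
      set S := Finset.univ.filter (fun j => (σ j).isRight) with hSdef
      set T := Finset.univ.filter (fun j => ¬ (σ j).isRight) with hTdef
      have hst : S.card + T.card = n := by
        rw [hSdef, hTdef, Finset.card_filter_add_card_filter_not]
        simp
      have hle : S.card ≤ T.card := by
        apply Finset.card_le_card_of_injOn
          (fun j => if h : (σ j).isRight then (H j h).choose else j)
        · intro j hj
          simp only [hSdef, Finset.mem_coe, Finset.mem_filter] at hj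
          simp only [dif_pos hj.2]
          obtain ⟨e, he1, he2⟩ := (H j hj.2).choose_spec
          simp [hTdef, he2]
        · intro j hj k hk hjk
          simp only [hSdef, Finset.coe_filter, Set.mem_setOf_eq] at hj hk
          simp only [dif_pos hj.2, dif_pos hk.2] at hjk
          obtain ⟨e, he1, he2⟩ := (H j hj.2).choose_spec
          obtain ⟨e', he1', he2'⟩ := (H k hk.2).choose_spec
          rw [hjk, he2'] at he2
          injection he2 with h'
          injection h' with h''
          exact hdist j k e he1 (by rw [he1', h''])
      omega
  · rintro ⟨hi, hn⟩
    rcases Nat.eq_zero_or_pos i with rfl | hpos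
    · refine ⟨fun _ => Sum.inl none, ?_, ?_, ?_, ?_⟩ <;> simp
    · have : Nonempty (Fin i ↪ Edge) := by
        rw [← Fintype.card_fin i] at hi
        exact Function.Embedding.nonempty_of_card_le hi
      obtain ⟨f⟩ := this
      set f' : ℕ → Edge := fun m => f ⟨m % i, Nat.mod_lt _ hpos⟩ with hf'
      have hf'inj : ∀ a b : ℕ, a < i → b < i → f' a = f' b → a = b := by
        intro a b ha hb h
        have := f.injective h
        have : a % i = b % i := congrArg Fin.val this
        rwa [Nat.mod_eq_of_lt ha, Nat.mod_eq_of_lt hb] at this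
      refine ⟨fun j => if j.val < i then Sum.inl (some (f' j.val))
        else if j.val < 2*i then Sum.inr (f' (j.val - i)) else Sum.inl none,
        ?_, ?_, ?_, ?_⟩
      · intro j k e hj hk
        dsimp only at hj hk
        split_ifs at hj hk
        all_goals simp only [Sum.inl.injEq, Sum.inr.injEq, reduceCtorEq,
          Option.some.injEq] at hj hk
        have := hf'inj _ _ (by omega) (by omega) (hj.trans hk.symm)
        exact Fin.ext (by omega)
      · have : (Finset.univ.filter (fun j : Fin n =>
            (if j.val < i then Sum.inl (some (f' j.val))
              else if j.val < 2*i then (Sum.inr (f' (j.val - i)) : Option Edge ⊕ Edge)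
              else Sum.inl none).isRight)) =
            Finset.univ.map ⟨fun k : Fin i => (⟨i + k.val, by omega⟩ : Fin n),
              by
                intro a b h
                have := congrArg Fin.val h
                simp at this
                exact Fin.ext this⟩ := by
          ext j
          simp only [Finset.mem_filter, Finset.mem_univ, true_and, Finset.mem_map,
            Function.Embedding.coeFn_mk]
          constructor
          · intro h
            split_ifs at h with h1 h2
            · simp at h
            · exact ⟨⟨j.val - i, by omega⟩, Fin.ext (by show i + (j.val - i) = j.val; omega)⟩
            · simp at h
          · rintro ⟨k, rfl⟩
            rw [if_neg (by show ¬ (i + k.val < i); omega), if_pos (by show i + k.val < 2*i; omega)]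
            simp
        rw [this]
        simp
      · intro j e hj
        dsimp only at hj
        by_cases h1 : (j : ℕ) < i
        · rw [if_pos h1] at hj
          injection hj with hj'
          injection hj' with hj''
          refine ⟨⟨i + j.val, by omega⟩, ?_⟩
          dsimp only
          rw [if_neg (by omega), if_pos (by omega)]
          rw [show i + (j : ℕ) - i = (j : ℕ) by omega, hj'']
        · by_cases h2 : (j : ℕ) < 2*i
          · rw [if_neg h1, if_pos h2] at hj
            exact absurd hj (by simp)
          · rw [if_neg h1, if_neg h2] at hj
            injection hj with hj'
            exact absurd hj' (by simp)
      · intro j e hj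
        dsimp only at hj
        by_cases h1 : (j : ℕ) < i
        · rw [if_pos h1] at hj
          exact absurd hj (by simp)
        · by_cases h2 : (j : ℕ) < 2*i
          · rw [if_neg h1, if_pos h2] at hj
            injection hj with hj'
            refine ⟨⟨j.val - i, by omega⟩, ?_, ?_⟩
            · dsimp only
              rw [if_pos (by omega), hj']
            · simp only [Fin.lt_def]; omega
          · rw [if_neg h1, if_neg h2] at hj
            exact absurd hj (by simp)
end

section
/- For any graph G with vertex set V, the assignment sending a finite set S to Conf_S^sink(G,V) ⊆ G^S and a morphism (f,g): S → T of FI_V to the map (f,g)_*: Conf_S^sink(G,V) → Conf_T^sink(G,V), defined by (f,g)_*(x)_j = x_{f⁻¹(j)} if j ∈ im(f) and g(j) otherwise, is functorial: it is well-defined (lands in the sink configuration space), continuous, and respects composition and identities. -/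
/-! STATEMENT 12: For a graph `G` with vertex set `V ⊆ G`, the assignment sending a
finite set `S` to `Conf_S^sink(G,V) ⊆ G^S` and an `FI_V`-morphism `(f,g) : S → T` to
the pushforward `(f,g)_* (x)_j = x_{f⁻¹(j)}` if `j ∈ im f` and `g(j)` otherwise, is
functorial: the pushforward lands in the sink configuration space, is continuous, and
respects composition and identities. -/

/-- A morphism `(f,g) : S → T` of `FI_V`. -/
structure FIVHom (V : Type*) (S T : Type*) where
  f : S → T
  inj : Function.Injective f
  g : ∀ t : T, t ∉ Set.range f → V

/-- The identity morphism of `FI_V`. -/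
def FIVHom.id (V S : Type*) : FIVHom V S S where
  f := fun s => s
  inj := fun _ _ h => h
  g := fun t ht => absurd ⟨t, rfl⟩ ht

attribute [local instance] Classical.propDecidable

/-- Composition in `FI_V`. -/
noncomputable def FIVHom.comp {V R S T : Type*} (p : FIVHom V S T) (q : FIVHom V R S) :
    FIVHom V R T where
  f := p.f ∘ q.f
  inj := p.inj.comp q.inj
  g := fun t ht =>
    if h : ∃ s, p.f s = t then
      q.g h.choose (fun hs => by
        obtain ⟨r, hr⟩ := hs
        exact ht ⟨r, by simp [Function.comp_apply, hr, h.choose_spec]⟩)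
    else
      p.g t (fun hs => h (by obtain ⟨s, hs'⟩ := hs; exact ⟨s, hs'⟩))

/-- The sink configuration space: tuples of points of `G` indexed by `S` which may only
collide on the vertex set `Vs`. -/
def sinkConf (G : Type*) (Vs : Set G) (S : Type*) : Set (S → G) :=
  {x | ∀ i j : S, i ≠ j → x i = x j → x i ∈ Vs}

/-- The pushforward along an `FI_V`-morphism `(f,g)`: coordinate `t` is `x_{f⁻¹(t)}` if
`t ∈ im f`, and the vertex `g(t)` otherwise. -/
noncomputable def confPush {G : Type*} {Vs : Set G} {S T : Type*}
    (p : FIVHom (↥Vs) S T) (x : S → G) : T → G := fun t =>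
  if h : ∃ s, p.f s = t then x h.choose else ↑(p.g t (fun hs => h hs))


namespace FIVHom

variable {V R S T : Type*}

theorem comp_g_apply_f (p : FIVHom V S T) (q : FIVHom V R S) (s : S)
    (hs : p.f s ∉ Set.range (p.comp q).f) (hq : s ∉ Set.range q.f) :
    (p.comp q).g (p.f s) hs = q.g s hq := by
  have h : ∃ s', p.f s' = p.f s := ⟨s, rfl⟩
  simp only [FIVHom.comp, dif_pos h]
  congr
  exact p.inj h.choose_spec

theorem comp_g_of_notMem_range (p : FIVHom V S T) (q : FIVHom V R S) (t : T)
    (ht : t ∉ Set.range (p.comp q).f) (hp : t ∉ Set.range p.f) :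
    (p.comp q).g t ht = p.g t hp :=
  dif_neg hp

end FIVHom

section confPush

variable {G : Type*} {Vs : Set G} {R S T : Type*}

@[simp]
theorem confPush_apply_f (p : FIVHom Vs S T) (x : S → G) (s : S) :
    confPush p x (p.f s) = x s := by
  have h : ∃ s', p.f s' = p.f s := ⟨s, rfl⟩
  rw [confPush, dif_pos h, p.inj h.choose_spec]

theorem confPush_apply_of_notMem_range (p : FIVHom Vs S T) (x : S → G) {t : T}
    (ht : t ∉ Set.range p.f) : confPush p x t = p.g t ht :=
  dif_neg ht

theorem confPush_mem_sinkConf (p : FIVHom Vs S T) {x : S → G} (hx : x ∈ sinkConf G Vs S) :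
    confPush p x ∈ sinkConf G Vs T := by
  intro i j hij heq
  by_cases hi : i ∈ Set.range p.f
  swap
  · rw [confPush_apply_of_notMem_range p x hi]
    exact (p.g i hi).2
  by_cases hj : j ∈ Set.range p.f
  swap
  · rw [heq, confPush_apply_of_notMem_range p x hj]
    exact (p.g j hj).2
  obtain ⟨s, rfl⟩ := hi
  obtain ⟨s', rfl⟩ := hj
  simp only [confPush_apply_f] at heq ⊢
  exact hx s s' (fun h => hij (congrArg p.f h)) heq

theorem continuous_confPush [TopologicalSpace G] (p : FIVHom Vs S T) :
    Continuous (confPush p : (S → G) → T → G) := by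
  refine continuous_pi fun t => ?_
  by_cases ht : t ∈ Set.range p.f
  · obtain ⟨s, rfl⟩ := ht
    simpa only [confPush_apply_f] using continuous_apply s
  · simpa only [confPush_apply_of_notMem_range _ _ ht] using continuous_const

theorem confPush_comp (p : FIVHom Vs S T) (q : FIVHom Vs R S) (x : R → G) :
    confPush (p.comp q) x = confPush p (confPush q x) := by
  funext t
  by_cases hp : t ∈ Set.range p.f
  swap
  · have hpq : t ∉ Set.range (p.comp q).f := fun ⟨r, hr⟩ => hp ⟨q.f r, hr⟩
    rw [confPush_apply_of_notMem_range _ _ hp, confPush_apply_of_notMem_range _ _ hpq,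
      FIVHom.comp_g_of_notMem_range p q t hpq hp]
  obtain ⟨s, rfl⟩ := hp
  by_cases hq : s ∈ Set.range q.f
  · obtain ⟨r, rfl⟩ := hq
    rw [confPush_apply_f, confPush_apply_f]
    exact confPush_apply_f (p.comp q) x r
  · have hpq : p.f s ∉ Set.range (p.comp q).f := fun ⟨r, hr⟩ => hq ⟨r, p.inj hr⟩
    rw [confPush_apply_f, confPush_apply_of_notMem_range _ _ hq,
      confPush_apply_of_notMem_range _ _ hpq, FIVHom.comp_g_apply_f p q s hpq hq]

theorem confPush_id (x : S → G) : confPush (FIVHom.id Vs S) x = x :=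
  funext (confPush_apply_f (FIVHom.id Vs S) x)

end confPush

/-- Functoriality of the sink configuration space with respect to `FI_V`. -/
theorem sinkConf_functorial (G : Type*) [TopologicalSpace G] (Vs : Set G) :
    -- well-defined: the pushforward lands in the sink configuration space
    (∀ (S T : Type) (p : FIVHom (↥Vs) S T) (x : S → G),
      x ∈ sinkConf G Vs S → confPush p x ∈ sinkConf G Vs T) ∧
    -- continuity of the induced map on the sink configuration spaces
    (∀ (S T : Type) (p : FIVHom (↥Vs) S T),
      Continuous (fun x : sinkConf G Vs S => confPush p (x : S → G))) ∧
    -- respects composition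
    (∀ (R S T : Type) (p : FIVHom (↥Vs) S T) (q : FIVHom (↥Vs) R S) (x : R → G),
      confPush (p.comp q) x = confPush p (confPush q x)) ∧
    -- respects identities
    (∀ (S : Type) (x : S → G), confPush (FIVHom.id (↥Vs) S) x = x) :=
  ⟨fun _ _ p _ hx => confPush_mem_sinkConf p hx,
    fun _ _ p => (continuous_confPush p).comp continuous_subtype_val,
    fun _ _ _ => confPush_comp, fun _ => confPush_id⟩
end

section
/- If W is a finitely generated FI_V-module over a Noetherian ring (taking Noetherianity of FI_V-Mod as a hypothesis), and T ⊆ W is the submodule of torsion elements (T_n = torsion subgroup of W_n over ℤ), then there is an integer e, independent of n, such that e·T_n = 0 for all n; i.e., the exponents of the torsion subgroups W_n are uniformly bounded. -/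
/-! The torsion subfunctor is finitely generated. Choosing for each generator a nonzero
integer killing it, their product kills every image of a generator under `W`, hence the
span of those images, which is the whole torsion subfunctor; its absolute value is `e`. -/

open CategoryTheory

theorem Submonoid.exists_forall_smul_eq_zero {R : Type*} [CommMonoid R] (S : Submonoid R)
    {ι : Type*} {M : ι → Type*} [∀ i, AddMonoid (M i)] [∀ i, DistribMulAction R (M i)]
    (L : List (Σ i, M i)) (hL : ∀ p ∈ L, ∃ a ∈ S, a • p.2 = 0) :
    ∃ s ∈ S, ∀ p ∈ L, s • p.2 = 0 := by
  induction L with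
  | nil => exact ⟨1, S.one_mem, by simp⟩
  | cons q L ih =>
    obtain ⟨a, haS, ha⟩ := hL q List.mem_cons_self
    obtain ⟨s, hsS, hs⟩ := ih fun p hp => hL p (List.mem_cons_of_mem q hp)
    refine ⟨a * s, S.mul_mem haS hsS, fun p hp => ?_⟩
    rcases List.mem_cons.mp hp with rfl | hp
    · rw [mul_comm, mul_smul, ha, smul_zero]
    · rw [mul_smul, hs p hp, smul_zero]

theorem LinearMap.map_mem_torsion' {R M N : Type*} [CommSemiring R] [AddCommMonoid M]
    [Module R M] [AddCommMonoid N] [Module R N] (S : Submonoid R) (f : M →ₗ[R] N) {x : M}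
    (hx : x ∈ Submodule.torsion' R M S) : f x ∈ Submodule.torsion' R N S := by
  obtain ⟨a, ha⟩ := (Submodule.mem_torsion'_iff S x).mp hx
  exact (Submodule.mem_torsion'_iff S _).mpr ⟨a, by rw [← f.map_smul_of_tower, ha, map_zero]⟩

section

variable {C : Type*} [Category C] {R : Type*} [CommRing R] (W : C ⥤ ModuleCat R)

theorem span_map_le_torsionBy (L : List (Σ c : C, W.obj c)) (a : R) (hL : ∀ p ∈ L, a • p.2 = 0)
    (c : C) :
    Submodule.span R {y : W.obj c | ∃ p ∈ L, ∃ f : p.1 ⟶ c, (W.map f) p.2 = y} ≤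
      Submodule.torsionBy R (W.obj c) a := by
  rw [Submodule.span_le]
  rintro _ ⟨p, hp, f, rfl⟩
  rw [SetLike.mem_coe, Submodule.mem_torsionBy_iff, ← map_smul, hL p hp, map_zero]

theorem exists_forall_smul_eq_zero_of_mem_torsion' (S : Submonoid R) (L : List (Σ c : C, W.obj c))
    (hL : ∀ p ∈ L, p.2 ∈ Submodule.torsion' R (W.obj p.1) S)
    (hspan : ∀ c : C, Submodule.torsion' R (W.obj c) S ≤
      Submodule.span R {y : W.obj c | ∃ p ∈ L, ∃ f : p.1 ⟶ c, (W.map f) p.2 = y}) :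
    ∃ s ∈ S, ∀ (c : C), ∀ x ∈ Submodule.torsion' R (W.obj c) S, s • x = 0 := by
  obtain ⟨s, hsS, hs⟩ := S.exists_forall_smul_eq_zero L fun p hp => by
    obtain ⟨⟨a, haS⟩, ha⟩ := (Submodule.mem_torsion'_iff S _).mp (hL p hp)
    exact ⟨a, haS, ha⟩
  exact ⟨s, hsS, fun c x hx => span_map_le_torsionBy W L s hs c (hspan c hx)⟩

end

/-- If `W` is a functor from a category `C` to `ℤ`-modules such that every
subfunctor of `W` is finitely generated (the Noetherian hypothesis), then the torsion
subgroups of the `W c` have uniformly bounded exponent: there is `e ≥ 1`, independent of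
`c`, with `e · x = 0` for every torsion element `x ∈ W c`. -/
theorem uniform_torsion_exponent (C : Type*) [Category C] (W : C ⥤ ModuleCat ℤ)
    (hNoeth : ∀ N : ∀ c : C, Submodule ℤ (W.obj c),
      (∀ (c d : C) (f : c ⟶ d), ∀ x ∈ N c, (W.map f) x ∈ N d) →
      ∃ L : List (Σ c : C, W.obj c), (∀ p ∈ L, p.2 ∈ N p.1) ∧
        ∀ c : C, N c ≤ Submodule.span ℤ
          {y : W.obj c | ∃ p ∈ L, ∃ f : p.1 ⟶ c, (W.map f) p.2 = y}) :
    ∃ e : ℕ, 1 ≤ e ∧ ∀ (c : C) (x : W.obj c),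
      (∃ m : ℕ, 1 ≤ m ∧ (m : ℤ) • x = 0) → (e : ℤ) • x = 0 := by
  obtain ⟨L, hL, hspan⟩ := hNoeth (fun c => Submodule.torsion ℤ (W.obj c))
    fun c d f x hx => (W.map f).hom.map_mem_torsion' _ hx
  obtain ⟨s, hs0, hs⟩ := exists_forall_smul_eq_zero_of_mem_torsion' W _ L hL hspan
  refine ⟨s.natAbs, Int.natAbs_pos.mpr (nonZeroDivisors.ne_zero hs0), fun c x ⟨m, hm, hmx⟩ => ?_⟩
  -- `W.obj c` carries its own `Module ℤ` instance, while the statement uses `zsmul`.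
  have hsx : s • x = 0 := (int_smul_eq_zsmul _ s x).symm.trans <|
    hs c x ((Submodule.mem_torsion_iff x).mpr
      ⟨⟨m, mem_nonZeroDivisors_of_ne_zero (by omega)⟩, (int_smul_eq_zsmul _ m x).trans hmx⟩)
  rw [Int.natCast_natAbs]
  rcases abs_choice s with h | h
  · rw [h, hsx]
  · rw [h, neg_zsmul, hsx, neg_zero]
end
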